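/- arXiv:1401.0076 — 5 statements merged into one kernel-verified Lean document; each statement's English description precedes it below -/
import Mathlib

section
/- For all ξ ∈ [0, 1/2], the rational function (54 - 108ξ + 72ξ² - 16ξ³)/(54 - 81ξ + 27ξ²) is well-defined (denominators positive) and lies in the interval [64/81, 1]. -/
/-!
Clearing the denominator `27 (1 - ξ) (2 - ξ)`, which is positive for `ξ < 1`, both bounds become
polynomial inequalities whose differences factor as `ξ (16 ξ² - 45 ξ + 27)` and
`54 (1 - 2 ξ) (12 ξ² - 32 ξ + 17)`; the quadratic factors are positive on `[0, 1/2]`, and the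
lower bound `64/81` is attained at `ξ = 1/2`.
-/

lemma ratio_denom_pos {ξ : ℝ} (h : ξ < 1) : 0 < 54 - 81 * ξ + 27 * ξ ^ 2 := by
  have factor : 54 - 81 * ξ + 27 * ξ ^ 2 = 27 * (1 - ξ) * (2 - ξ) := by ring
  rw [factor]
  exact mul_pos (mul_pos (by norm_num) (by linarith)) (by linarith)

lemma ratio_num_le_denom {ξ : ℝ} (h0 : 0 ≤ ξ) (h1 : ξ ≤ 3 / 5) :
    54 - 108 * ξ + 72 * ξ ^ 2 - 16 * ξ ^ 3 ≤ 54 - 81 * ξ + 27 * ξ ^ 2 := by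
  have factor : (54 - 81 * ξ + 27 * ξ ^ 2) - (54 - 108 * ξ + 72 * ξ ^ 2 - 16 * ξ ^ 3) =
      ξ * (27 - 45 * ξ + 16 * ξ ^ 2) := by ring
  have hquad : 0 ≤ 27 - 45 * ξ + 16 * ξ ^ 2 := by linarith [sq_nonneg ξ]
  linarith [mul_nonneg h0 hquad]

lemma ratio_lower_mul_denom_le_num {ξ : ℝ} (h : ξ ≤ 1 / 2) :
    64 / 81 * (54 - 81 * ξ + 27 * ξ ^ 2) ≤ 54 - 108 * ξ + 72 * ξ ^ 2 - 16 * ξ ^ 3 := by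
  have factor : 81 * (54 - 108 * ξ + 72 * ξ ^ 2 - 16 * ξ ^ 3) - 64 * (54 - 81 * ξ + 27 * ξ ^ 2) =
      54 * (1 - 2 * ξ) * (12 * ξ ^ 2 + 32 * (1 / 2 - ξ) + 1) := by ring
  have hquad : 0 ≤ 12 * ξ ^ 2 + 32 * (1 / 2 - ξ) + 1 := by linarith [sq_nonneg ξ]
  linarith [mul_nonneg (by linarith : (0 : ℝ) ≤ 1 - 2 * ξ) hquad]

theorem ratio_bound_small_xi (ξ : ℝ) (h0 : 0 ≤ ξ) (h1 : ξ ≤ 1 / 2) :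
    0 < 54 - 81 * ξ + 27 * ξ ^ 2 ∧
    64 / 81 ≤ (54 - 108 * ξ + 72 * ξ ^ 2 - 16 * ξ ^ 3) / (54 - 81 * ξ + 27 * ξ ^ 2) ∧
    (54 - 108 * ξ + 72 * ξ ^ 2 - 16 * ξ ^ 3) / (54 - 81 * ξ + 27 * ξ ^ 2) ≤ 1 := by
  have hD := ratio_denom_pos (by linarith : ξ < 1)
  exact ⟨hD, (le_div_iff₀ hD).2 (ratio_lower_mul_denom_le_num h1),
    (div_le_one hD).2 (ratio_num_le_denom h0 (by linarith))⟩
end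

section
/- For all ξ ∈ [1/8, 1] (more generally whenever the denominator is positive), the function Λ(ξ) = ξ / (1/2 - (3/2)√(3/2)·√((2 - 7ξ + 9ξ² - 5ξ³ + ξ⁴)/(27 - 32ξ + 9ξ²))) satisfies 216/125 ≤ Λ(ξ) ≤ 2. -/
/-!
Write `t = (3/2)·√(3/2)·√(P/Q)` for the term subtracted in the denominator of `Λ`; then
`t = √(27 P / (8 Q))`. Two polynomial identities,
`2 (1-ξ)² Q - 27 P = ξ (1-ξ)² (17 - 9ξ)` and
`1259712 P - 8 (108 - 125ξ)² Q = ξ² (134712 ξ² - 354560 ξ + 210600)`,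
give `(108 - 125ξ)/216 ≤ t ≤ (1-ξ)/2` on `(0, 1]`. Hence the denominator `1/2 - t` lies between
`ξ/2` and `125ξ/216`, which are exactly the two bounds on `Λ = ξ / (1/2 - t)`.
-/

open Real

noncomputable def lambdaRadicand (ξ : ℝ) : ℝ :=
  27 * (2 - 7 * ξ + 9 * ξ ^ 2 - 5 * ξ ^ 3 + ξ ^ 4) / (8 * (27 - 32 * ξ + 9 * ξ ^ 2))

lemma lambda_term_eq_sqrt_lambdaRadicand (ξ : ℝ) :
    (3 / 2) * √(3 / 2) *
        √((2 - 7 * ξ + 9 * ξ ^ 2 - 5 * ξ ^ 3 + ξ ^ 4) / (27 - 32 * ξ + 9 * ξ ^ 2)) =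
      √(lambdaRadicand ξ) := by
  have h32 : (3 / 2 : ℝ) = √(9 / 4) := by
    rw [show (9 / 4 : ℝ) = (3 / 2) ^ 2 by norm_num, sqrt_sq (by norm_num)]
  rw [lambdaRadicand]
  nth_rewrite 1 [h32]
  rw [← sqrt_mul (by norm_num), ← sqrt_mul (by norm_num), ← div_mul_div_comm]
  congr 1
  ring

lemma lambda_quadratic_pos {ξ : ℝ} (h : ξ ≤ 1) : 0 < 27 - 32 * ξ + 9 * ξ ^ 2 := by
  nlinarith [sq_nonneg (1 - ξ)]

lemma sqrt_lambdaRadicand_le {ξ : ℝ} (h0 : 0 ≤ ξ) (h1 : ξ ≤ 1) :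
    √(lambdaRadicand ξ) ≤ (1 - ξ) / 2 := by
  have hQ := lambda_quadratic_pos h1
  refine sqrt_le_iff.2 ⟨by linarith, ?_⟩
  rw [lambdaRadicand, div_le_iff₀ (by positivity)]
  have key : ((1 - ξ) / 2) ^ 2 * (8 * (27 - 32 * ξ + 9 * ξ ^ 2)) -
      27 * (2 - 7 * ξ + 9 * ξ ^ 2 - 5 * ξ ^ 3 + ξ ^ 4) = ξ * (1 - ξ) ^ 2 * (17 - 9 * ξ) := by
    ring
  have : 0 ≤ ξ * (1 - ξ) ^ 2 * (17 - 9 * ξ) := by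
    have : 0 ≤ 17 - 9 * ξ := by linarith
    positivity
  linarith

lemma le_sqrt_lambdaRadicand (ξ : ℝ) : (108 - 125 * ξ) / 216 ≤ √(lambdaRadicand ξ) := by
  rcases le_or_gt (108 - 125 * ξ) 0 with hξ | hξ
  · exact (div_nonpos_of_nonpos_of_nonneg hξ (by norm_num)).trans (sqrt_nonneg _)
  have hQ := lambda_quadratic_pos (ξ := ξ) (by linarith)
  refine (le_sqrt' (by positivity)).2 ?_
  rw [lambdaRadicand, le_div_iff₀ (by positivity)]
  have key : 27 * (2 - 7 * ξ + 9 * ξ ^ 2 - 5 * ξ ^ 3 + ξ ^ 4) -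
      ((108 - 125 * ξ) / 216) ^ 2 * (8 * (27 - 32 * ξ + 9 * ξ ^ 2)) =
        ξ ^ 2 * (134712 * ξ ^ 2 - 354560 * ξ + 210600) / 46656 := by
    ring
  -- the quadratic factor has its smaller root near 0.906 > 108/125
  have hquad : 0 ≤ 134712 * ξ ^ 2 - 354560 * ξ + 210600 := by
    nlinarith [sq_nonneg (ξ - 108 / 125)]
  have : 0 ≤ ξ ^ 2 * (134712 * ξ ^ 2 - 354560 * ξ + 210600) / 46656 := by positivity
  linarith

theorem Lambda_bounds (ξ : ℝ) (h0 : 1 / 8 ≤ ξ) (h1 : ξ ≤ 1) :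
    216 / 125 ≤ ξ / (1 / 2 - (3 / 2) * Real.sqrt (3 / 2) *
        Real.sqrt ((2 - 7 * ξ + 9 * ξ ^ 2 - 5 * ξ ^ 3 + ξ ^ 4) / (27 - 32 * ξ + 9 * ξ ^ 2))) ∧
    ξ / (1 / 2 - (3 / 2) * Real.sqrt (3 / 2) *
        Real.sqrt ((2 - 7 * ξ + 9 * ξ ^ 2 - 5 * ξ ^ 3 + ξ ^ 4) / (27 - 32 * ξ + 9 * ξ ^ 2))) ≤ 2 := by
  rw [lambda_term_eq_sqrt_lambdaRadicand]
  have hupper := sqrt_lambdaRadicand_le (by linarith) h1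
  have hlower := le_sqrt_lambdaRadicand ξ
  have hD : 0 < 1 / 2 - √(lambdaRadicand ξ) := by linarith
  constructor
  · rw [le_div_iff₀ hD]
    linarith
  · rw [div_le_iff₀ hD]
    linarith
end

section
/- Define R₁(ξ) = -(1/2)ξ(3-ξ), R₂(ξ) = (1/6)ξ(5-2ξ)(1+ξ), R₃(ξ) = -(1/4)ξ(4-ξ+2ξ²-ξ³). For ξ ∈ (0,1], set c₂ = R₃/R₂ and β₄ = 1 - R₂/c₂². Then |c₂| ≤ 6/5, β₄ ∈ [0,1], and (1-β₄)c₂ ≥ R₁, (1-β₄)c₂² = R₂, (1-β₄)c₂³ = R₃. -/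
/-!
Setting `c₂ = R₃ / R₂` and `w = 1 - β₄ = R₂ / c₂²`, the pair `(w, c₂)` is the one-point fit
`w c₂² = R₂`, `w c₂³ = R₃` of the moments `R₂, R₃`, and `w = R₂³ / R₃²`, `w c₂ = R₂² / R₃`.
So the two equalities are identities, and since `R₂ > 0 > R₃` on `(0, 1]` the remaining claims
become the polynomial inequalities `-R₃ ≤ 6/5 R₂`, `R₂³ ≤ R₃²` and `R₂² ≤ R₁ R₃`. Each difference
factors as `ξ²` times a polynomial in `t = 1 - ξ` with visibly nonnegative value for `t ∈ [0, 1]`.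
-/

section MomentFit

variable {K : Type*} [Field K] {a b : K}

theorem div_div_sq_eq (a b : K) : a / (b / a) ^ 2 = a ^ 3 / b ^ 2 := by
  rw [div_pow, div_div_eq_mul_div]
  ring

theorem div_div_sq_mul_self (a b : K) : a / (b / a) ^ 2 * (b / a) = a ^ 2 / b := by
  field_simp

theorem div_div_sq_mul_sq (ha : a ≠ 0) (hb : b ≠ 0) : a / (b / a) ^ 2 * (b / a) ^ 2 = a :=
  div_mul_cancel₀ a (pow_ne_zero 2 (div_ne_zero hb ha))

theorem div_div_sq_mul_cube (ha : a ≠ 0) (hb : b ≠ 0) : a / (b / a) ^ 2 * (b / a) ^ 3 = b := by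
  field_simp

end MomentFit

section Polynomials

variable {ξ : ℝ}

theorem R₂_pos (h0 : 0 < ξ) (h1 : ξ ≤ 1) : 0 < (1 / 6) * ξ * (5 - 2 * ξ) * (1 + ξ) :=
  mul_pos (mul_pos (mul_pos (by norm_num) h0) (by linarith)) (by linarith)

theorem R₃_neg (h0 : 0 < ξ) (h1 : ξ ≤ 1) : -(1 / 4) * ξ * (4 - ξ + 2 * ξ ^ 2 - ξ ^ 3) < 0 := by
  have hP : 0 < 4 - ξ + 2 * ξ ^ 2 - ξ ^ 3 := by nlinarith [sq_nonneg ξ]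
  exact mul_neg_of_neg_of_pos (mul_neg_of_neg_of_pos (by norm_num) h0) hP

theorem neg_R₃_le_six_fifths_R₂ (ξ : ℝ) :
    -(-(1 / 4) * ξ * (4 - ξ + 2 * ξ ^ 2 - ξ ^ 3)) ≤ 6 / 5 * ((1 / 6) * ξ * (5 - 2 * ξ) * (1 + ξ)) := by
  have key : 6 / 5 * ((1 / 6) * ξ * (5 - 2 * ξ) * (1 + ξ)) - -(-(1 / 4) * ξ * (4 - ξ + 2 * ξ ^ 2 - ξ ^ 3))
      = ξ ^ 2 * ((5 * ξ - 9) ^ 2 + 4) / 100 := by ring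
  rw [← sub_nonneg, key]
  positivity

theorem R₂_cube_le_R₃_sq (h0 : 0 ≤ ξ) (h1 : ξ ≤ 1) :
    ((1 / 6) * ξ * (5 - 2 * ξ) * (1 + ξ)) ^ 3 ≤ (-(1 / 4) * ξ * (4 - ξ + 2 * ξ ^ 2 - ξ ^ 3)) ^ 2 := by
  obtain ⟨t, rfl⟩ : ∃ t, ξ = 1 - t := ⟨1 - ξ, by ring⟩
  have ht0 : 0 ≤ t := by linarith
  have ht1 : t ≤ 1 := by linarith
  have key : (-(1 / 4) * (1 - t) * (4 - (1 - t) + 2 * (1 - t) ^ 2 - (1 - t) ^ 3)) ^ 2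
        - ((1 / 6) * (1 - t) * (5 - 2 * (1 - t)) * (1 + (1 - t))) ^ 3
      = (1 - t) ^ 2 / 432 * t *
          (216 + 396 * t - 38 * t ^ 2 - 247 * t ^ 3 + 54 * t ^ 4 + 67 * t ^ 5 - 16 * t ^ 6) := by
    ring
  -- `t ^ k ≤ t` on `[0, 1]` lets `396 t` absorb the negative terms
  have hq : 0 ≤ 216 + 396 * t - 38 * t ^ 2 - 247 * t ^ 3 + 54 * t ^ 4 + 67 * t ^ 5 - 16 * t ^ 6 := by
    have h2 := pow_le_of_le_one ht0 ht1 (n := 2) (by norm_num)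
    have h3 := pow_le_of_le_one ht0 ht1 (n := 3) (by norm_num)
    have h6 := pow_le_of_le_one ht0 ht1 (n := 6) (by norm_num)
    have : 0 ≤ t ^ 4 := by positivity
    have : 0 ≤ t ^ 5 := by positivity
    linarith
  rw [← sub_nonneg, key]
  exact mul_nonneg (mul_nonneg (by positivity) ht0) hq

theorem R₂_sq_le_R₁_mul_R₃ (h1 : ξ ≤ 1) :
    ((1 / 6) * ξ * (5 - 2 * ξ) * (1 + ξ)) ^ 2 ≤
      (-(1 / 2) * ξ * (3 - ξ)) * (-(1 / 4) * ξ * (4 - ξ + 2 * ξ ^ 2 - ξ ^ 3)) := by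
  obtain ⟨t, rfl⟩ : ∃ t, ξ = 1 - t := ⟨1 - ξ, by ring⟩
  have ht0 : 0 ≤ t := by linarith
  have key : (-(1 / 2) * (1 - t) * (3 - (1 - t))) *
          (-(1 / 4) * (1 - t) * (4 - (1 - t) + 2 * (1 - t) ^ 2 - (1 - t) ^ 3))
        - ((1 / 6) * (1 - t) * (5 - 2 * (1 - t)) * (1 + (1 - t))) ^ 2
      = (1 - t) ^ 2 / 72 * t * (12 + 28 * t + 17 * t ^ 2 + t ^ 3) := by
    ring
  rw [← sub_nonneg, key]
  positivity

end Polynomials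

theorem c2_beta4_properties (ξ : ℝ) (h0 : 0 < ξ) (h1 : ξ ≤ 1) :
    let R₁ : ℝ := -(1 / 2) * ξ * (3 - ξ)
    let R₂ : ℝ := (1 / 6) * ξ * (5 - 2 * ξ) * (1 + ξ)
    let R₃ : ℝ := -(1 / 4) * ξ * (4 - ξ + 2 * ξ ^ 2 - ξ ^ 3)
    let c₂ : ℝ := R₃ / R₂
    let β₄ : ℝ := 1 - R₂ / c₂ ^ 2
    |c₂| ≤ 6 / 5 ∧ (0 ≤ β₄ ∧ β₄ ≤ 1) ∧
    (1 - β₄) * c₂ ≥ R₁ ∧ (1 - β₄) * c₂ ^ 2 = R₂ ∧ (1 - β₄) * c₂ ^ 3 = R₃ := by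
  intro R₁ R₂ R₃ c₂ β₄
  have hR₂ : 0 < R₂ := R₂_pos h0 h1
  have hR₃ : R₃ < 0 := R₃_neg h0 h1
  have hw : 1 - β₄ = R₂ / c₂ ^ 2 := sub_sub_cancel 1 _
  refine ⟨?_, ⟨?_, ?_⟩, ?_, ?_, ?_⟩
  · rw [abs_div, abs_of_neg hR₃, abs_of_pos hR₂, div_le_iff₀ hR₂]
    exact neg_R₃_le_six_fifths_R₂ ξ
  · rw [sub_nonneg, div_div_sq_eq, div_le_one (sq_pos_of_neg hR₃)]
    exact R₂_cube_le_R₃_sq h0.le h1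
  · exact sub_le_self 1 (div_nonneg hR₂.le (sq_nonneg c₂))
  · rw [hw, div_div_sq_mul_self, ge_iff_le, le_div_iff_of_neg hR₃]
    exact R₂_sq_le_R₁_mul_R₃ h1
  · rw [hw]
    exact div_div_sq_mul_sq hR₂.ne' hR₃.ne
  · rw [hw]
    exact div_div_sq_mul_cube hR₂.ne' hR₃.ne
end

section
/- For ξ ∈ (0,1], with R₂(ξ) = (1/6)ξ(5-2ξ)(1+ξ) and R₃(ξ) = -(1/4)ξ(4-ξ+2ξ²-ξ³), the ratio |R₃(ξ)/R₂(ξ)| is at most 6/5. -/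
/-!
Both polynomials carry a factor `ξ`; the numerator `4 - ξ + 2ξ² - ξ³ = (4 - ξ) + ξ²(2 - ξ)` is
positive and `R₂ > 0` on `(0, 1]`, so the claim is `-R₃ ≤ 6/5 · R₂`. That gap is
`ξ²(5ξ² - 18ξ + 17)/20`, and the quadratic has negative discriminant.
-/

namespace SemiLagrangian

noncomputable def R₂ (ξ : ℝ) : ℝ := (1 / 6) * ξ * (5 - 2 * ξ) * (1 + ξ)

noncomputable def R₃ (ξ : ℝ) : ℝ := -(1 / 4) * ξ * (4 - ξ + 2 * ξ ^ 2 - ξ ^ 3)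

theorem R₂_pos {ξ : ℝ} (h0 : 0 < ξ) (h1 : ξ < 5 / 2) : 0 < R₂ ξ := by
  have : 0 < 5 - 2 * ξ := by linarith
  unfold R₂
  positivity

theorem R₃_nonpos {ξ : ℝ} (h0 : 0 ≤ ξ) (h2 : ξ ≤ 2) : R₃ ξ ≤ 0 := by
  have hcubic : 0 ≤ 4 - ξ + 2 * ξ ^ 2 - ξ ^ 3 := by
    have : 0 ≤ ξ ^ 2 * (2 - ξ) := mul_nonneg (sq_nonneg ξ) (by linarith)
    nlinarith
  unfold R₃
  nlinarith

theorem six_fifths_mul_R₂_add_R₃ (ξ : ℝ) :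
    6 / 5 * R₂ ξ + R₃ ξ = ξ ^ 2 * (5 * (ξ - 9 / 5) ^ 2 + 4 / 5) / 20 := by
  unfold R₂ R₃
  ring

theorem neg_R₃_le (ξ : ℝ) : -R₃ ξ ≤ 6 / 5 * R₂ ξ := by
  have : 0 ≤ 6 / 5 * R₂ ξ + R₃ ξ := by
    rw [six_fifths_mul_R₂_add_R₃]
    positivity
  linarith

end SemiLagrangian

theorem ratio_R3_R2_bound (ξ : ℝ) (h0 : 0 < ξ) (h1 : ξ ≤ 1) :
    |(-(1 / 4) * ξ * (4 - ξ + 2 * ξ ^ 2 - ξ ^ 3)) /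
      ((1 / 6) * ξ * (5 - 2 * ξ) * (1 + ξ))| ≤ 6 / 5 := by
  change |SemiLagrangian.R₃ ξ / SemiLagrangian.R₂ ξ| ≤ 6 / 5
  have hR₂ : 0 < SemiLagrangian.R₂ ξ := SemiLagrangian.R₂_pos h0 (by linarith)
  have hR₃ := SemiLagrangian.R₃_nonpos h0.le (by linarith)
  rw [abs_div, abs_of_pos hR₂, abs_of_nonpos hR₃, div_le_iff₀ hR₂]
  exact SemiLagrangian.neg_R₃_le ξ
end

section
/- With R₂, R₃ as above, for all ξ ∈ [0,1] and z ∈ [0,1], the inequality R₂(ξ,z)³ ≥ (64/81)·R₃(ξ,z)² holds when ξ ≤ min(z³, 1/2). -/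
/-!
Put `P = z - 9ξ/8 + ξ²/4`, a polynomial minorant of `√R₂` that is exact at `ξ = 0`, where
`R₂ = z²` and `R₃ = z³`. On the region `0 ≤ ξ ≤ min (z³, 1/2)`, `0 ≤ z ≤ 1` one has
`R₃ ≥ 0`, `P² ≤ R₂` and `R₃ ≤ (9/8) P R₂`, each certified by a nonnegative combination of
products of `ξ, z, z³ - ξ, 1/2 - ξ, 1 - z`. Squaring the last bound gives
`R₃² ≤ (81/64) P² R₂² ≤ (81/64) R₂³`.
-/

noncomputable section

def R₂ (ξ z : ℝ) : ℝ :=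
  (5 / 6) * ξ + (1 / 2) * ξ ^ 2 - (1 / 3) * ξ ^ 3 + (ξ ^ 2 - 3 * ξ) * z + z ^ 2

def R₃ (ξ z : ℝ) : ℝ :=
  (1 / 4) * (-4 * ξ + ξ ^ 2 - 2 * ξ ^ 3 + ξ ^ 4) +
    (1 / 4) * (10 * ξ + 6 * ξ ^ 2 - 4 * ξ ^ 3) * z +
    (1 / 4) * (-18 * ξ + 6 * ξ ^ 2) * z ^ 2 + z ^ 3

def sqrtR₂Minorant (ξ z : ℝ) : ℝ := z - (9 / 8) * ξ + (1 / 4) * ξ ^ 2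

end

theorem sq_le_mul_cube_of_le_mul_of_sq_le {a b p c : ℝ} (hb : 0 ≤ b) (hpa : p ^ 2 ≤ a)
    (hbpa : b ≤ c * (p * a)) : b ^ 2 ≤ c ^ 2 * a ^ 3 := by
  have ha : 0 ≤ a := (sq_nonneg p).trans hpa
  calc b ^ 2 ≤ (c * (p * a)) ^ 2 := pow_le_pow_left₀ hb hbpa 2
    _ = c ^ 2 * (p ^ 2 * a ^ 2) := by ring
    _ ≤ c ^ 2 * (a * a ^ 2) := by gcongr
    _ = c ^ 2 * a ^ 3 := by ring

section Certificates

variable {ξ z : ℝ}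

theorem R₃_nonneg (hξ : 0 ≤ ξ) (hξz : ξ ≤ z ^ 3) (hξ2 : ξ ≤ 1 / 2)
    (hz : 0 ≤ z) (hz1 : z ≤ 1) :
    0 ≤ R₃ ξ z := by
  have hs : 0 ≤ z ^ 3 - ξ := sub_nonneg.2 hξz
  have ht : 0 ≤ 1 / 2 - ξ := sub_nonneg.2 hξ2
  have hu : 0 ≤ 1 - z := sub_nonneg.2 hz1
  unfold R₃
  linarith [mul_nonneg (mul_nonneg hξ (pow_nonneg hz 2)) hs,
    mul_nonneg (mul_nonneg (pow_nonneg hξ 2) (pow_nonneg hz 2)) ht, mul_nonneg hs (pow_nonneg hu 3),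
    mul_nonneg (pow_nonneg hz 4) (pow_nonneg hu 2),
    mul_nonneg (mul_nonneg hξ (pow_nonneg hz 2)) (pow_nonneg hu 3),
    mul_nonneg (pow_nonneg hξ 3) (pow_nonneg hu 3), mul_nonneg (mul_nonneg hξ hz) (pow_nonneg hu 3),
    mul_nonneg (mul_nonneg (pow_nonneg hz 2) hs) hu, mul_nonneg hξ (pow_nonneg hz 5),
    mul_nonneg (mul_nonneg hξ hs) (pow_nonneg hu 2), mul_nonneg (pow_nonneg hξ 2) (pow_nonneg hu 4),
    mul_nonneg hs hu, hs,
    mul_nonneg (mul_nonneg (mul_nonneg hξ (pow_nonneg hz 2)) ht) (pow_nonneg hu 2),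
    mul_nonneg (mul_nonneg hz hs) (pow_nonneg ht 2), mul_nonneg hs (pow_nonneg ht 3),
    mul_nonneg hs ht, mul_nonneg (pow_nonneg hξ 3) hs, mul_nonneg (pow_nonneg hξ 5) hu,
    mul_nonneg (mul_nonneg (pow_nonneg hξ 2) hz) (pow_nonneg ht 2),
    mul_nonneg (mul_nonneg (pow_nonneg hξ 2) (pow_nonneg ht 3)) hu]

theorem sqrtR₂Minorant_sq_le_R₂ (hξ : 0 ≤ ξ) (hξz : ξ ≤ z ^ 3) (hξ2 : ξ ≤ 1 / 2)
    (hz : 0 ≤ z) (hz1 : z ≤ 1) :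
    sqrtR₂Minorant ξ z ^ 2 ≤ R₂ ξ z := by
  have hs : 0 ≤ z ^ 3 - ξ := sub_nonneg.2 hξz
  have ht : 0 ≤ 1 / 2 - ξ := sub_nonneg.2 hξ2
  have hu : 0 ≤ 1 - z := sub_nonneg.2 hz1
  unfold sqrtR₂Minorant R₂
  linarith [mul_nonneg hξ ht, mul_nonneg hξ hu, mul_nonneg (mul_nonneg hξ ht) (pow_nonneg hu 2),
    mul_nonneg (mul_nonneg hξ hz) (pow_nonneg hu 2),
    mul_nonneg (mul_nonneg hξ (pow_nonneg hz 2)) (pow_nonneg hu 2),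
    mul_nonneg (mul_nonneg (mul_nonneg hξ (pow_nonneg hz 2)) ht) hu,
    mul_nonneg (mul_nonneg hξ hs) hu, mul_nonneg (pow_nonneg hξ 2) (pow_nonneg hu 3),
    mul_nonneg hξ (pow_nonneg ht 2), mul_nonneg (pow_nonneg hξ 4) ht,
    mul_nonneg hξ (pow_nonneg ht 4)]

theorem R₃_le_sqrtR₂Minorant_mul_R₂ (hξ : 0 ≤ ξ) (hξz : ξ ≤ z ^ 3) (hξ2 : ξ ≤ 1 / 2)
    (hz : 0 ≤ z) (hz1 : z ≤ 1) :
    R₃ ξ z ≤ 9 / 8 * (sqrtR₂Minorant ξ z * R₂ ξ z) := by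
  have hs : 0 ≤ z ^ 3 - ξ := sub_nonneg.2 hξz
  have ht : 0 ≤ 1 / 2 - ξ := sub_nonneg.2 hξ2
  have hu : 0 ≤ 1 - z := sub_nonneg.2 hz1
  unfold R₃ sqrtR₂Minorant R₂
  linarith [mul_nonneg (mul_nonneg hz hs) ht, mul_nonneg (mul_nonneg hξ ht) (pow_nonneg hu 2),
    mul_nonneg (mul_nonneg hξ (pow_nonneg hz 2)) (pow_nonneg hu 3),
    mul_nonneg (mul_nonneg hξ hs) (pow_nonneg hu 2),
    mul_nonneg (mul_nonneg hξ (pow_nonneg ht 2)) (pow_nonneg hu 3),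
    mul_nonneg (mul_nonneg (pow_nonneg hz 3) (pow_nonneg ht 2)) hu,
    mul_nonneg (mul_nonneg hξ (pow_nonneg ht 3)) (pow_nonneg hu 2),
    mul_nonneg (mul_nonneg hξ hz) (pow_nonneg hu 3),
    mul_nonneg (mul_nonneg (mul_nonneg hξ (pow_nonneg hz 2)) ht) (pow_nonneg hu 2),
    mul_nonneg (pow_nonneg hξ 4) hu,
    mul_nonneg (mul_nonneg (mul_nonneg (pow_nonneg hξ 2) (pow_nonneg hz 2)) ht) hu,
    mul_nonneg (mul_nonneg (pow_nonneg hξ 2) hs) hu, mul_nonneg hs (pow_nonneg ht 3),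
    mul_nonneg (pow_nonneg hξ 2) (pow_nonneg hu 4), mul_nonneg (mul_nonneg hξ (pow_nonneg ht 3)) hu,
    mul_nonneg hs (pow_nonneg ht 2), mul_nonneg (pow_nonneg hz 3) (pow_nonneg ht 2),
    mul_nonneg hξ (pow_nonneg hu 2),
    mul_nonneg (mul_nonneg (pow_nonneg hξ 2) (pow_nonneg hz 2)) (pow_nonneg ht 2),
    mul_nonneg (pow_nonneg hξ 5) ht, mul_nonneg (pow_nonneg hξ 2) (pow_nonneg ht 4)]

end Certificates

theorem R2_cubed_ge_R3_squared_general (ξ z : ℝ) (hξ0 : 0 ≤ ξ)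
    (hz0 : 0 ≤ z) (hz1 : z ≤ 1) (hmin : ξ ≤ min (z ^ 3) (1 / 2)) :
    ((5 / 6) * ξ + (1 / 2) * ξ ^ 2 - (1 / 3) * ξ ^ 3 + (ξ ^ 2 - 3 * ξ) * z + z ^ 2) ^ 3 ≥
      (64 / 81) *
        ((1 / 4) * (-4 * ξ + ξ ^ 2 - 2 * ξ ^ 3 + ξ ^ 4) +
          (1 / 4) * (10 * ξ + 6 * ξ ^ 2 - 4 * ξ ^ 3) * z +
          (1 / 4) * (-18 * ξ + 6 * ξ ^ 2) * z ^ 2 + z ^ 3) ^ 2 := by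
  obtain ⟨hξz, hξ2⟩ := le_min_iff.1 hmin
  have key : R₃ ξ z ^ 2 ≤ (9 / 8) ^ 2 * R₂ ξ z ^ 3 :=
    sq_le_mul_cube_of_le_mul_of_sq_le (R₃_nonneg hξ0 hξz hξ2 hz0 hz1)
      (sqrtR₂Minorant_sq_le_R₂ hξ0 hξz hξ2 hz0 hz1)
      (R₃_le_sqrtR₂Minorant_mul_R₂ hξ0 hξz hξ2 hz0 hz1)
  change R₂ ξ z ^ 3 ≥ 64 / 81 * R₃ ξ z ^ 2
  linarith

theorem R2_cubed_ge_R3_squared (ξ z : ℝ) (hξ0 : 0 ≤ ξ) (hξ1 : ξ ≤ 1)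
    (hz0 : 0 ≤ z) (hz1 : z ≤ 1) (hmin : ξ ≤ min (z ^ 3) (1 / 2)) :
    ((5 / 6) * ξ + (1 / 2) * ξ ^ 2 - (1 / 3) * ξ ^ 3 + (ξ ^ 2 - 3 * ξ) * z + z ^ 2) ^ 3 ≥
      (64 / 81) *
        ((1 / 4) * (-4 * ξ + ξ ^ 2 - 2 * ξ ^ 3 + ξ ^ 4) +
          (1 / 4) * (10 * ξ + 6 * ξ ^ 2 - 4 * ξ ^ 3) * z +
          (1 / 4) * (-18 * ξ + 6 * ξ ^ 2) * z ^ 2 + z ^ 3) ^ 2 :=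
  R2_cubed_ge_R3_squared_general ξ z hξ0 hz0 hz1 hmin
end
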